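/- Let A be a unital C*-algebra and b∈A with C(b) > 0. Then every a ∈ A not in span{b} has a unique best approximation in span{b} with respect to the numerical radius norm: there is a unique b_a ∈ span{b} with v(a − b_a) = dist_v(a, span{b}), and v(a − p) > v(a − b_a) for all p ∈ span{b}, p ≠ b_a. -/

import Mathlib

open scoped ComplexOrder

/-- A state on a unital C*-algebra: a positive linear functional with `φ 1 = 1` and norm 1. -/
def IsState (A : Type*) [CStarAlgebra A] (φ : A →L[ℂ] ℂ) : Prop :=
  (∀ a : A, 0 ≤ φ (star a * a)) ∧ φ 1 = 1 ∧ ‖φ‖ = 1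

/-- The numerical radius `v(a) = sup {|φ(a)| : φ a state}`. -/
noncomputable def nr {A : Type*} [CStarAlgebra A] (a : A) : ℝ :=
  sSup {r : ℝ | ∃ φ : A →L[ℂ] ℂ, IsState A φ ∧ r = ‖φ a‖}

/-- The numerical radius Crawford number `C(b) = inf {|φ(b)| : φ a state}`. -/
noncomputable def crawford {A : Type*} [CStarAlgebra A] (b : A) : ℝ :=
  sInf {r : ℝ | ∃ φ : A →L[ℂ] ℂ, IsState A φ ∧ r = ‖φ b‖}

/-- Numerical radius Birkhoff--James orthogonality: `v(a + λ b) ≥ v(a)` for all `λ ∈ ℂ`. -/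
def nrOrth {A : Type*} [CStarAlgebra A] (a b : A) : Prop :=
  ∀ lam : ℂ, nr a ≤ nr (a + lam • b)

/-- Birkhoff--James orthogonality: `‖a + λ b‖ ≥ ‖a‖` for all `λ ∈ ℂ`. -/
def bjOrth {A : Type*} [CStarAlgebra A] (a b : A) : Prop :=
  ∀ lam : ℂ, ‖a‖ ≤ ‖a + lam • b‖

variable {A : Type*} [CStarAlgebra A]

/-!
The function `c ↦ v(a - c b)` is continuous (`v` is 1-Lipschitz, since `v ≤ ‖·‖`)
and coercive, because `|φ(a - c b)| ≥ |c| C(b) - v(a)` for every state `φ`; hence it attains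
its minimum. For uniqueness, apply the parallelogram law in `ℂ` to `φ x` and `φ y` for each state:
`|φ((x + y)/2)|² + |φ(x - y)|²/4 ≤ max (v x) (v y)²`. When `x - y = μ b` with `μ ≠ 0`, the second
term is at least `|μ|² C(b)²/4 > 0` uniformly in `φ`, so the midpoint of two distinct
minimisers would do strictly better.
-/

namespace IsState

variable {φ : A →L[ℂ] ℂ}

lemma norm_apply_le (hφ : IsState A φ) (x : A) : ‖φ x‖ ≤ ‖x‖ := by
  simpa [hφ.2.2] using φ.le_opNorm x

lemma norm_apply_le_nr (hφ : IsState A φ) (x : A) : ‖φ x‖ ≤ nr x :=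
  le_csSup ⟨‖x‖, by rintro _ ⟨ψ, hψ, rfl⟩; exact hψ.norm_apply_le x⟩ ⟨φ, hφ, rfl⟩

lemma crawford_le_norm_apply (hφ : IsState A φ) (b : A) : crawford b ≤ ‖φ b‖ :=
  csInf_le ⟨0, by rintro _ ⟨ψ, -, rfl⟩; exact norm_nonneg _⟩ ⟨φ, hφ, rfl⟩

end IsState

lemma exists_isState_of_crawford_pos {b : A} (hb : 0 < crawford b) :
    ∃ φ : A →L[ℂ] ℂ, IsState A φ := by
  by_contra! h
  -- without states, `crawford b = sInf ∅ = 0`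
  simp [crawford, h] at hb

lemma nr_le_of_forall {x : A} {r : ℝ} (hr : 0 ≤ r)
    (h : ∀ φ : A →L[ℂ] ℂ, IsState A φ → ‖φ x‖ ≤ r) : nr x ≤ r :=
  Real.sSup_le (by rintro _ ⟨φ, hφ, rfl⟩; exact h φ hφ) hr

lemma nr_nonneg (x : A) : 0 ≤ nr x :=
  Real.sSup_nonneg (by rintro _ ⟨φ, -, rfl⟩; exact norm_nonneg _)

lemma nr_le_norm (x : A) : nr x ≤ ‖x‖ :=
  nr_le_of_forall (norm_nonneg x) fun _ hφ => hφ.norm_apply_le x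

lemma nr_add_le (x y : A) : nr (x + y) ≤ nr x + nr y :=
  nr_le_of_forall (add_nonneg (nr_nonneg x) (nr_nonneg y)) fun φ hφ => by
    rw [map_add]
    exact (norm_add_le _ _).trans (add_le_add (hφ.norm_apply_le_nr x) (hφ.norm_apply_le_nr y))

lemma lipschitzWith_one_nr : LipschitzWith 1 (nr : A → ℝ) :=
  LipschitzWith.of_le_add fun x y =>
    calc nr x = nr (y + (x - y)) := by rw [add_sub_cancel]
      _ ≤ nr y + nr (x - y) := nr_add_le y (x - y)
      _ ≤ nr y + dist x y := by rw [dist_eq_norm]; gcongr; exact nr_le_norm _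

lemma norm_mul_crawford_sub_nr_le (hA : ∃ φ : A →L[ℂ] ℂ, IsState A φ) (a b : A) (c : ℂ) :
    ‖c‖ * crawford b - nr a ≤ nr (a - c • b) := by
  obtain ⟨φ, hφ⟩ := hA
  have hφb : c * φ b = φ a - φ (a - c • b) := by simp [map_sub]
  refine sub_le_iff_le_add'.2 ?_
  calc ‖c‖ * crawford b ≤ ‖c‖ * ‖φ b‖ := by gcongr; exact hφ.crawford_le_norm_apply b
    _ = ‖φ a - φ (a - c • b)‖ := by rw [← norm_mul, hφb]
    _ ≤ ‖φ a‖ + ‖φ (a - c • b)‖ := norm_sub_le _ _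
    _ ≤ nr a + nr (a - c • b) := add_le_add (hφ.norm_apply_le_nr _) (hφ.norm_apply_le_nr _)

lemma exists_forall_nr_sub_smul_le (a : A) {b : A} (hb : 0 < crawford b) :
    ∃ c₀ : ℂ, ∀ c : ℂ, nr (a - c₀ • b) ≤ nr (a - c • b) := by
  refine (lipschitzWith_one_nr.continuous.comp (by fun_prop)).exists_forall_le ?_
  refine Filter.tendsto_atTop_mono (norm_mul_crawford_sub_nr_le (exists_isState_of_crawford_pos hb) a b) ?_
  exact Filter.tendsto_atTop_add_const_right _ _ (tendsto_norm_cocompact_atTop.atTop_mul_const hb)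

lemma IsState.norm_apply_half_add_sq_add_le {φ : A →L[ℂ] ℂ} (hφ : IsState A φ) (x y : A) :
    ‖φ ((2 : ℂ)⁻¹ • (x + y))‖ ^ 2 + (‖φ (x - y)‖ / 2) ^ 2 ≤ max (nr x) (nr y) ^ 2 := by
  have hmid : ‖φ ((2 : ℂ)⁻¹ • (x + y))‖ = ‖φ x + φ y‖ / 2 := by
    rw [map_smul, map_add, smul_eq_mul, norm_mul, norm_inv, Complex.norm_two, inv_mul_eq_div]
  have hx : ‖φ x‖ ^ 2 ≤ max (nr x) (nr y) ^ 2 :=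
    pow_le_pow_left₀ (norm_nonneg _) ((hφ.norm_apply_le_nr x).trans (le_max_left _ _)) 2
  have hy : ‖φ y‖ ^ 2 ≤ max (nr x) (nr y) ^ 2 :=
    pow_le_pow_left₀ (norm_nonneg _) ((hφ.norm_apply_le_nr y).trans (le_max_right _ _)) 2
  have hpar := parallelogram_law_with_norm ℂ (φ x) (φ y)
  rw [hmid, map_sub]
  nlinarith

lemma nr_half_add_lt_max {b x y : A} (hb : 0 < crawford b) {μ : ℂ} (hμ : μ ≠ 0)
    (hxy : x - y = μ • b) : nr ((2 : ℂ)⁻¹ • (x + y)) < max (nr x) (nr y) := by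
  set M := max (nr x) (nr y)
  set g := (‖μ‖ * crawford b / 2) ^ 2
  have hg : 0 < g := by have := norm_pos_iff.2 hμ; positivity
  have hstate : ∀ φ : A →L[ℂ] ℂ, IsState A φ → ‖φ ((2 : ℂ)⁻¹ • (x + y))‖ ^ 2 ≤ M ^ 2 - g := by
    intro φ hφ
    have hdiff : ‖μ‖ * crawford b ≤ ‖φ (x - y)‖ := by
      rw [hxy, map_smul, smul_eq_mul, norm_mul]
      gcongr
      exact hφ.crawford_le_norm_apply b
    have := hφ.norm_apply_half_add_sq_add_le x y
    have : g ≤ (‖φ (x - y)‖ / 2) ^ 2 := by simp only [g]; gcongr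
    linarith
  obtain ⟨φ, hφ⟩ := exists_isState_of_crawford_pos hb
  have hgM : 0 ≤ M ^ 2 - g := (sq_nonneg _).trans (hstate φ hφ)
  calc nr ((2 : ℂ)⁻¹ • (x + y)) ≤ √(M ^ 2 - g) :=
        nr_le_of_forall (Real.sqrt_nonneg _) fun ψ hψ => Real.le_sqrt_of_sq_le (hstate ψ hψ)
    _ < √(M ^ 2) := Real.sqrt_lt_sqrt hgM (by linarith)
    _ = M := Real.sqrt_sq ((nr_nonneg x).trans (le_max_left _ _))

lemma nr_sub_smul_lt_of_forall_le {a b : A} (hb : 0 < crawford b) {c₀ : ℂ}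
    (hmin : ∀ c : ℂ, nr (a - c₀ • b) ≤ nr (a - c • b)) {c : ℂ} (hc : c ≠ c₀) :
    nr (a - c₀ • b) < nr (a - c • b) := by
  refine (hmin c).lt_of_ne fun heq => ?_
  have hmid : (2 : ℂ)⁻¹ • ((a - c₀ • b) + (a - c • b)) = a - ((2 : ℂ)⁻¹ * (c₀ + c)) • b := by
    module
  have hlt := nr_half_add_lt_max hb (sub_ne_zero.2 hc)
    (show (a - c₀ • b) - (a - c • b) = (c - c₀) • b by module)
  rw [hmid, ← heq, max_self] at hlt
  exact (hmin _).not_gt hlt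

theorem stmt17_general (a b : A) (hb : 0 < crawford b) :
    ∃ ba ∈ (Submodule.span ℂ {b} : Submodule ℂ A),
      nr (a - ba) = sInf ((fun p => nr (a - p)) '' (Submodule.span ℂ {b} : Submodule ℂ A)) ∧
      ∀ p ∈ (Submodule.span ℂ {b} : Submodule ℂ A), p ≠ ba → nr (a - ba) < nr (a - p) := by
  obtain ⟨c₀, hmin⟩ := exists_forall_nr_sub_smul_le a hb
  have hspan (c : ℂ) : c • b ∈ Submodule.span ℂ {b} :=
    Submodule.smul_mem _ c (Submodule.mem_span_singleton_self b)
  refine ⟨c₀ • b, hspan c₀, ?_, ?_⟩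
  · refine (IsLeast.csInf_eq ?_).symm
    refine ⟨⟨c₀ • b, hspan c₀, rfl⟩, ?_⟩
    rintro _ ⟨p, hp, rfl⟩
    obtain ⟨c, rfl⟩ := Submodule.mem_span_singleton.1 hp
    exact hmin c
  · rintro p hp hne
    obtain ⟨c, rfl⟩ := Submodule.mem_span_singleton.1 hp
    exact nr_sub_smul_lt_of_forall_le hb hmin fun h => hne (h ▸ rfl)

theorem stmt17 (a b : A) (hb : 0 < crawford b)
    (ha : a ∉ (Submodule.span ℂ {b} : Submodule ℂ A)) :
    ∃ ba ∈ (Submodule.span ℂ {b} : Submodule ℂ A),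
      nr (a - ba) = sInf ((fun p => nr (a - p)) '' (Submodule.span ℂ {b} : Submodule ℂ A)) ∧
      ∀ p ∈ (Submodule.span ℂ {b} : Submodule ℂ A), p ≠ ba → nr (a - ba) < nr (a - p) :=
  stmt17_general a b hb
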